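/- For every positive integer n and positive integer k, Σ_{x ≤ n} τ(x)^k ≤ n · (log(e·n))^(2^k − 1). -/

import Mathlib

open Finset

lemma tau_mul_le (m n : ℕ) :
    (m * n).divisors.card ≤ m.divisors.card * n.divisors.card := by
  rcases eq_or_ne (m * n) 0 with h | h
  · simp [h]
  have hm : m ≠ 0 := left_ne_zero_of_mul h
  have hn : n ≠ 0 := right_ne_zero_of_mul h
  rw [← Finset.card_product]
  apply Finset.card_le_card_of_injOn (fun d => (Nat.gcd d m, d / Nat.gcd d m))
  · intro d hd
    rw [Finset.mem_coe, Nat.mem_divisors] at hd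
    obtain ⟨hdvd, -⟩ := hd
    have hd0 : d ≠ 0 := by rintro rfl; exact h (Nat.eq_zero_of_zero_dvd hdvd)
    have hg0 : Nat.gcd d m ≠ 0 := fun hg => hd0 (Nat.eq_zero_of_gcd_eq_zero_left hg)
    have hdg : d / Nat.gcd d m * Nat.gcd d m = d := Nat.div_mul_cancel (Nat.gcd_dvd_left d m)
    have hmg : m / Nat.gcd d m * Nat.gcd d m = m := Nat.div_mul_cancel (Nat.gcd_dvd_right d m)
    have h2 : d / Nat.gcd d m ∣ m / Nat.gcd d m * n := by
      apply Nat.dvd_of_mul_dvd_mul_right (Nat.pos_of_ne_zero hg0)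
      rw [hdg, mul_right_comm, hmg]
      exact hdvd
    have h1 : d / Nat.gcd d m ∣ n :=
      (Nat.coprime_div_gcd_div_gcd (Nat.pos_of_ne_zero hg0)).dvd_of_dvd_mul_left h2
    simp only [Finset.mem_coe, Finset.mem_product, Nat.mem_divisors]
    exact ⟨⟨Nat.gcd_dvd_right d m, hm⟩, ⟨h1, hn⟩⟩
  · intro a _ b _ hab
    have h1 : Nat.gcd a m = Nat.gcd b m := congrArg Prod.fst hab
    have h2 : a / Nat.gcd a m = b / Nat.gcd b m := congrArg Prod.snd hab
    calc a = Nat.gcd a m * (a / Nat.gcd a m) := (Nat.mul_div_cancel' (Nat.gcd_dvd_left a m)).symm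
      _ = Nat.gcd b m * (b / Nat.gcd b m) := by rw [h2, h1]
      _ = b := Nat.mul_div_cancel' (Nat.gcd_dvd_left b m)

lemma swap_sum (n : ℕ) (F : ℕ → ℕ → ℝ) :
    ∑ x ∈ Finset.Icc 1 n, ∑ p ∈ x.divisorsAntidiagonal, F p.1 p.2
      = ∑ d ∈ Finset.Icc 1 n, ∑ m ∈ Finset.Icc 1 (n / d), F d m := by
  rw [Finset.sum_sigma', Finset.sum_sigma']
  refine Finset.sum_bij' (fun p _ => ⟨p.2.1, p.2.2⟩) (fun p _ => ⟨p.1 * p.2, (p.1, p.2)⟩)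
    ?_ ?_ ?_ ?_ ?_
  · rintro ⟨x, d, m⟩ hp
    simp only [Finset.mem_sigma, Finset.mem_Icc, Nat.mem_divisorsAntidiagonal] at hp ⊢
    obtain ⟨⟨h1, h2⟩, h3, h4⟩ := hp
    have hd0 : d ≠ 0 := by rintro rfl; simp at h3; omega
    have hm0 : m ≠ 0 := by rintro rfl; simp at h3; omega
    refine ⟨⟨Nat.one_le_iff_ne_zero.2 hd0, ?_⟩, Nat.one_le_iff_ne_zero.2 hm0, ?_⟩
    · calc d ≤ d * m := Nat.le_mul_of_pos_right d (Nat.pos_of_ne_zero hm0)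
        _ = x := h3
        _ ≤ n := h2
    · rw [Nat.le_div_iff_mul_le (Nat.pos_of_ne_zero hd0), mul_comm]
      omega
  · rintro ⟨d, m⟩ hp
    simp only [Finset.mem_sigma, Finset.mem_Icc, Nat.mem_divisorsAntidiagonal] at hp ⊢
    obtain ⟨⟨h1, h2⟩, h3, h4⟩ := hp
    have hdm : d * m ≤ n := by
      rw [mul_comm]; exact (Nat.le_div_iff_mul_le (by omega)).1 h4
    have h11 : 1 * 1 ≤ d * m := Nat.mul_le_mul h1 h3
    exact ⟨⟨by omega, hdm⟩, trivial, by omega⟩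
  · rintro ⟨x, d, m⟩ hp
    simp only [Finset.mem_sigma, Finset.mem_Icc, Nat.mem_divisorsAntidiagonal] at hp
    exact Sigma.ext hp.2.1 (heq_of_eq rfl)
  · rintro ⟨d, m⟩ _
    rfl
  · rintro ⟨x, d, m⟩ _
    rfl

lemma card_antidiag (x : ℕ) : x.divisorsAntidiagonal.card = x.divisors.card := by
  rw [← Nat.image_fst_divisorsAntidiagonal]
  refine (Finset.card_image_of_injOn ?_).symm
  intro p hp q hq h
  rw [Finset.mem_coe, Nat.mem_divisorsAntidiagonal] at hp hq
  have h1 : p.1 ≠ 0 := by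
    rintro h0
    rw [h0, zero_mul] at hp
    exact hp.2 hp.1.symm
  apply Prod.ext h
  apply Nat.eq_of_mul_eq_mul_left (Nat.pos_of_ne_zero h1)
  rw [hp.1, h, hq.1]

lemma harmonic_bound (n : ℕ) (hn : 1 ≤ n) :
    ∑ x ∈ Finset.Icc 1 n, ((x : ℝ))⁻¹ ≤ Real.log (Real.exp 1 * n) := by
  rw [Real.log_mul (Real.exp_ne_zero 1) (by exact_mod_cast Nat.one_le_iff_ne_zero.1 hn),
    Real.log_exp]
  calc ∑ x ∈ Finset.Icc 1 n, ((x : ℝ))⁻¹ = (harmonic n : ℝ) := by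
        rw [harmonic_eq_sum_Icc]; push_cast; rfl
    _ ≤ 1 + Real.log n := harmonic_le_one_add_log n

lemma log_en_nonneg (n : ℕ) (hn : 1 ≤ n) : 0 ≤ Real.log (Real.exp 1 * n) := by
  apply Real.log_nonneg
  have h1 : (1 : ℝ) ≤ Real.exp 1 := by linarith [Real.add_one_le_exp 1]
  have h2 : (1 : ℝ) ≤ (n : ℝ) := by exact_mod_cast hn
  nlinarith

lemma log_en_mono {a b : ℕ} (ha : 1 ≤ a) (hab : a ≤ b) :
    Real.log (Real.exp 1 * a) ≤ Real.log (Real.exp 1 * b) := by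
  apply Real.log_le_log (by positivity)
  have : (a : ℝ) ≤ b := by exact_mod_cast hab
  nlinarith [Real.exp_pos 1]

/-- Key weighted bound: `∑_{x ≤ n} τ(x)^k / x ≤ log(e n)^(2^k)`. -/
lemma S_bound (k : ℕ) : ∀ n : ℕ,
    ∑ x ∈ Finset.Icc 1 n, ((x.divisors.card : ℝ)) ^ k / x
      ≤ (Real.log (Real.exp 1 * n)) ^ (2 ^ k) := by
  induction k with
  | zero =>
    intro n
    rcases Nat.eq_zero_or_pos n with rfl | hn
    · simp
    simp only [pow_zero, pow_one]
    calc ∑ x ∈ Finset.Icc 1 n, (1 : ℝ) / x = ∑ x ∈ Finset.Icc 1 n, ((x : ℝ))⁻¹ := by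
          simp [one_div]
      _ ≤ Real.log (Real.exp 1 * n) := harmonic_bound n hn
  | succ k ih =>
    intro n
    rcases Nat.eq_zero_or_pos n with rfl | hn
    · simp
    set L := Real.log (Real.exp 1 * n) with hL
    have hL0 : 0 ≤ L := log_en_nonneg n hn
    have key : ∑ x ∈ Finset.Icc 1 n, ((x.divisors.card : ℝ)) ^ (k + 1) / x
        = ∑ d ∈ Finset.Icc 1 n, ∑ m ∈ Finset.Icc 1 (n / d),
            ((d * m : ℕ).divisors.card : ℝ) ^ k / ((d * m : ℕ) : ℝ) := by
      rw [← swap_sum n (fun d m => ((d * m : ℕ).divisors.card : ℝ) ^ k / ((d * m : ℕ) : ℝ))]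
      apply Finset.sum_congr rfl
      intro x hx
      rw [Finset.mem_Icc] at hx
      have hx0 : x ≠ 0 := by omega
      have hcard : ((x.divisorsAntidiagonal.card : ℝ)) = (x.divisors.card : ℝ) := by
        rw [card_antidiag]
      calc ((x.divisors.card : ℝ)) ^ (k + 1) / x
          = (x.divisorsAntidiagonal.card : ℝ) * (((x.divisors.card : ℝ)) ^ k / x) := by
            rw [hcard]; ring
        _ = ∑ p ∈ x.divisorsAntidiagonal, ((x.divisors.card : ℝ)) ^ k / x := by
            rw [Finset.sum_const, nsmul_eq_mul]
        _ = ∑ p ∈ x.divisorsAntidiagonal,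
              ((p.1 * p.2 : ℕ).divisors.card : ℝ) ^ k / ((p.1 * p.2 : ℕ) : ℝ) := by
            apply Finset.sum_congr rfl
            intro p hp
            rw [Nat.mem_divisorsAntidiagonal] at hp
            rw [hp.1]
    rw [key]
    have step : ∀ d ∈ Finset.Icc 1 n,
        ∑ m ∈ Finset.Icc 1 (n / d), ((d * m : ℕ).divisors.card : ℝ) ^ k / ((d * m : ℕ) : ℝ)
          ≤ ((d.divisors.card : ℝ) ^ k / d) * L ^ (2 ^ k) := by
      intro d hd
      rw [Finset.mem_Icc] at hd
      have hd1 : (1 : ℝ) ≤ d := by exact_mod_cast hd.1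
      calc ∑ m ∈ Finset.Icc 1 (n / d), ((d * m : ℕ).divisors.card : ℝ) ^ k / ((d * m : ℕ) : ℝ)
          ≤ ∑ m ∈ Finset.Icc 1 (n / d),
              ((d.divisors.card : ℝ) ^ k / d) * ((m.divisors.card : ℝ) ^ k / m) := by
            apply Finset.sum_le_sum
            intro m hm
            rw [Finset.mem_Icc] at hm
            have hm1 : (1 : ℝ) ≤ m := by exact_mod_cast hm.1
            have htau : ((d * m : ℕ).divisors.card : ℝ) ≤
                (d.divisors.card : ℝ) * (m.divisors.card : ℝ) := by
              exact_mod_cast tau_mul_le d m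
            have htau0 : (0 : ℝ) ≤ ((d * m : ℕ).divisors.card : ℝ) := by positivity
            have hpow : ((d * m : ℕ).divisors.card : ℝ) ^ k ≤
                ((d.divisors.card : ℝ) * (m.divisors.card : ℝ)) ^ k :=
              pow_le_pow_left₀ htau0 htau k
            have hcast : ((d * m : ℕ) : ℝ) = (d : ℝ) * m := by push_cast; ring
            rw [hcast, div_mul_div_comm, ← mul_pow]
            have hc : (0 : ℝ) < (d : ℝ) * m := by nlinarith
            exact (div_le_div_iff_of_pos_right hc).2 hpow
          _ = ((d.divisors.card : ℝ) ^ k / d) *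
              ∑ m ∈ Finset.Icc 1 (n / d), ((m.divisors.card : ℝ) ^ k / m) := by
            rw [Finset.mul_sum]
          _ ≤ ((d.divisors.card : ℝ) ^ k / d) * L ^ (2 ^ k) := by
            apply mul_le_mul_of_nonneg_left _ (by positivity)
            calc ∑ m ∈ Finset.Icc 1 (n / d), ((m.divisors.card : ℝ) ^ k / m)
                ≤ (Real.log (Real.exp 1 * (n / d : ℕ))) ^ (2 ^ k) := ih (n / d)
              _ ≤ L ^ (2 ^ k) := by
                  rcases Nat.eq_zero_or_pos (n / d) with h | h
                  · simp only [h, Nat.cast_zero, mul_zero, Real.log_zero,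
                      zero_pow (pow_ne_zero k (two_ne_zero))]
                    exact pow_nonneg hL0 _
                  · exact pow_le_pow_left₀ (log_en_nonneg _ h)
                      (log_en_mono h (Nat.div_le_self n d)) _
    calc ∑ d ∈ Finset.Icc 1 n, ∑ m ∈ Finset.Icc 1 (n / d),
            ((d * m : ℕ).divisors.card : ℝ) ^ k / ((d * m : ℕ) : ℝ)
        ≤ ∑ d ∈ Finset.Icc 1 n, ((d.divisors.card : ℝ) ^ k / d) * L ^ (2 ^ k) :=
          Finset.sum_le_sum step
      _ = (∑ d ∈ Finset.Icc 1 n, ((d.divisors.card : ℝ) ^ k / d)) * L ^ (2 ^ k) := by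
          rw [← Finset.sum_mul]
      _ ≤ L ^ (2 ^ k) * L ^ (2 ^ k) :=
          mul_le_mul_of_nonneg_right (ih n) (pow_nonneg hL0 _)
      _ = L ^ (2 ^ (k + 1)) := by rw [← pow_add]; ring_nf
 
lemma A_bound (k : ℕ) : ∀ n : ℕ,
    ∑ x ∈ Finset.Icc 1 n, ((x.divisors.card : ℝ)) ^ k
      ≤ (n : ℝ) * (Real.log (Real.exp 1 * n)) ^ (2 ^ k - 1) := by
  induction k with
  | zero =>
    intro n
    simp
  | succ k ih =>
    intro n
    rcases Nat.eq_zero_or_pos n with rfl | hn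
    · simp
    set L := Real.log (Real.exp 1 * n) with hL
    have hL0 : 0 ≤ L := log_en_nonneg n hn
    have key : ∑ x ∈ Finset.Icc 1 n, ((x.divisors.card : ℝ)) ^ (k + 1)
        = ∑ d ∈ Finset.Icc 1 n, ∑ m ∈ Finset.Icc 1 (n / d),
            ((d * m : ℕ).divisors.card : ℝ) ^ k := by
      rw [← swap_sum n (fun d m => ((d * m : ℕ).divisors.card : ℝ) ^ k)]
      apply Finset.sum_congr rfl
      intro x hx
      rw [Finset.mem_Icc] at hx
      have hcard : ((x.divisorsAntidiagonal.card : ℝ)) = (x.divisors.card : ℝ) := by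
        rw [card_antidiag]
      calc ((x.divisors.card : ℝ)) ^ (k + 1)
          = (x.divisorsAntidiagonal.card : ℝ) * ((x.divisors.card : ℝ)) ^ k := by
            rw [hcard]; ring
        _ = ∑ p ∈ x.divisorsAntidiagonal, ((x.divisors.card : ℝ)) ^ k := by
            rw [Finset.sum_const, nsmul_eq_mul]
        _ = ∑ p ∈ x.divisorsAntidiagonal, ((p.1 * p.2 : ℕ).divisors.card : ℝ) ^ k := by
            apply Finset.sum_congr rfl
            intro p hp
            rw [Nat.mem_divisorsAntidiagonal] at hp
            rw [hp.1]
    rw [key]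
    have step : ∀ d ∈ Finset.Icc 1 n,
        ∑ m ∈ Finset.Icc 1 (n / d), ((d * m : ℕ).divisors.card : ℝ) ^ k
          ≤ ((d.divisors.card : ℝ) ^ k / d) * ((n : ℝ) * L ^ (2 ^ k - 1)) := by
      intro d hd
      rw [Finset.mem_Icc] at hd
      have hd1 : (1 : ℝ) ≤ d := by exact_mod_cast hd.1
      calc ∑ m ∈ Finset.Icc 1 (n / d), ((d * m : ℕ).divisors.card : ℝ) ^ k
          ≤ ∑ m ∈ Finset.Icc 1 (n / d), (d.divisors.card : ℝ) ^ k * (m.divisors.card : ℝ) ^ k := by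
            apply Finset.sum_le_sum
            intro m hm
            have htau : ((d * m : ℕ).divisors.card : ℝ) ≤
                (d.divisors.card : ℝ) * (m.divisors.card : ℝ) := by
              exact_mod_cast tau_mul_le d m
            calc ((d * m : ℕ).divisors.card : ℝ) ^ k
                ≤ ((d.divisors.card : ℝ) * (m.divisors.card : ℝ)) ^ k :=
                  pow_le_pow_left₀ (by positivity) htau k
              _ = (d.divisors.card : ℝ) ^ k * (m.divisors.card : ℝ) ^ k := mul_pow _ _ _
          _ = (d.divisors.card : ℝ) ^ k *
              ∑ m ∈ Finset.Icc 1 (n / d), (m.divisors.card : ℝ) ^ k := by rw [Finset.mul_sum]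
          _ ≤ (d.divisors.card : ℝ) ^ k *
              (((n / d : ℕ) : ℝ) * (Real.log (Real.exp 1 * (n / d : ℕ))) ^ (2 ^ k - 1)) :=
            mul_le_mul_of_nonneg_left (ih (n / d)) (by positivity)
          _ ≤ (d.divisors.card : ℝ) ^ k * (((n : ℝ) / d) * L ^ (2 ^ k - 1)) := by
            apply mul_le_mul_of_nonneg_left _ (by positivity)
            have hfloor : ((n / d : ℕ) : ℝ) ≤ (n : ℝ) / d := Nat.cast_div_le
            rcases Nat.eq_zero_or_pos (n / d) with h | h
            · simp only [h, Nat.cast_zero, zero_mul]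
              exact mul_nonneg (by positivity) (pow_nonneg hL0 _)
            · exact mul_le_mul hfloor
                (pow_le_pow_left₀ (log_en_nonneg _ h) (log_en_mono h (Nat.div_le_self n d)) _)
                (pow_nonneg (log_en_nonneg _ h) _) (by positivity)
          _ = ((d.divisors.card : ℝ) ^ k / d) * ((n : ℝ) * L ^ (2 ^ k - 1)) := by ring
    calc ∑ d ∈ Finset.Icc 1 n, ∑ m ∈ Finset.Icc 1 (n / d), ((d * m : ℕ).divisors.card : ℝ) ^ k
        ≤ ∑ d ∈ Finset.Icc 1 n, ((d.divisors.card : ℝ) ^ k / d) * ((n : ℝ) * L ^ (2 ^ k - 1)) :=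
          Finset.sum_le_sum step
      _ = (∑ d ∈ Finset.Icc 1 n, ((d.divisors.card : ℝ) ^ k / d)) * ((n : ℝ) * L ^ (2 ^ k - 1)) := by
          rw [← Finset.sum_mul]
      _ ≤ L ^ (2 ^ k) * ((n : ℝ) * L ^ (2 ^ k - 1)) :=
          mul_le_mul_of_nonneg_right (S_bound k n)
            (mul_nonneg (Nat.cast_nonneg n) (pow_nonneg hL0 _))
      _ = (n : ℝ) * L ^ (2 ^ (k + 1) - 1) := by
          rw [← mul_assoc, mul_comm (L ^ (2 ^ k)) (n : ℝ), mul_assoc, ← pow_add]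
          congr 2
          have : 1 ≤ 2 ^ k := Nat.one_le_two_pow
          omega

theorem stmt_9 (n k : ℕ) (hn : 1 ≤ n) (hk : 1 ≤ k) :
    ∑ x ∈ Finset.Icc 1 n, ((x.divisors.card : ℝ)) ^ k
      ≤ (n : ℝ) * (Real.log (Real.exp 1 * n)) ^ (2 ^ k - 1) := by
  exact A_bound k n
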